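/- Let m, k be integers with m ≥ 5 and 2 ≤ k ≤ ⌊(m-1)/2⌋, and let ḡ_{(m,k)} be the associated function on 𝔽_3^m. Then the ternary linear code C_{ḡ_{(m,k)}} is minimal: for every nonzero codeword c of C_{ḡ_{(m,k)}} and every codeword c' of C_{ḡ_{(m,k)}}, if supp(c') ⊆ supp(c) then c' = α·c for some α ∈ 𝔽_3. -/
import Mathlib


open Finset

/-- The function `ḡ_{(m,k)} : 𝔽_3^m → 𝔽_3`: `1` if `wt(x) > k`, `0` if `wt(x) ≤ k`. -/
def gbar {m : ℕ} (k : ℕ) (x : Fin m → ZMod 3) : ZMod 3 :=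
  if k < hammingNorm x then 1 else 0

lemma gbar_eq_zero {m k : ℕ} {x : Fin m → ZMod 3} (h : hammingNorm x ≤ k) : gbar k x = 0 :=
  if_neg (not_lt.mpr h)

lemma gbar_eq_one {m k : ℕ} {x : Fin m → ZMod 3} (h : k < hammingNorm x) : gbar k x = 1 :=
  if_pos h

lemma hn_le {m : ℕ} (x : Fin m → ZMod 3) (s : Finset (Fin m))
    (h : ∀ t, x t ≠ 0 → t ∈ s) : hammingNorm x ≤ s.card := by
  apply Finset.card_le_card
  intro t ht
  simp only [hammingNorm, Finset.mem_filter, Finset.mem_univ, true_and] at ht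
  exact h t ht

lemma le_hn {m : ℕ} (x : Fin m → ZMod 3) (s : Finset (Fin m))
    (h : ∀ t ∈ s, x t ≠ 0) : s.card ≤ hammingNorm x := by
  apply Finset.card_le_card
  intro t ht
  simp only [hammingNorm, Finset.mem_filter, Finset.mem_univ, true_and]
  exact h t ht

lemma zmod3_sq {a : ZMod 3} (ha : a ≠ 0) : a * a = 1 := by
  revert ha; revert a; decide

lemma sum_single_mul {m : ℕ} (v : Fin m → ZMod 3) (i : Fin m) (c : ZMod 3) :
    ∑ j, v j * (Pi.single i c : Fin m → ZMod 3) j = v i * c := by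
  simp [Pi.single_apply, mul_ite, Finset.sum_ite_eq']

/-- For `m ≥ 5` and `2 ≤ k ≤ ⌊(m-1)/2⌋`, the ternary code
`C_{ḡ_{(m,k)}}` is minimal: if the support of the codeword `c_{u',v'}` is contained
in the support of the nonzero codeword `c_{u,v}`, then `c_{u',v'} = α·c_{u,v}` for
some `α ∈ 𝔽_3`. -/
theorem stmt_18 (m k : ℕ) (hm : 5 ≤ m) (hk2 : 2 ≤ k) (hk : k ≤ (m - 1) / 2) :
    ∀ (u : ZMod 3) (v : Fin m → ZMod 3) (u' : ZMod 3) (v' : Fin m → ZMod 3),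
      (∃ x : Fin m → ZMod 3, x ≠ 0 ∧ u * gbar k x + ∑ j, v j * x j ≠ 0) →
      (∀ x : Fin m → ZMod 3, x ≠ 0 →
        u' * gbar k x + ∑ j, v' j * x j ≠ 0 → u * gbar k x + ∑ j, v j * x j ≠ 0) →
      ∃ α : ZMod 3, ∀ x : Fin m → ZMod 3, x ≠ 0 →
        u' * gbar k x + ∑ j, v' j * x j = α * (u * gbar k x + ∑ j, v j * x j) := by
  intro u v u' v' hnz hsupp
  -- contrapositive form of the support hypothesis
  have hzero : ∀ x : Fin m → ZMod 3, x ≠ 0 →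
      u * gbar k x + ∑ j, v j * x j = 0 → u' * gbar k x + ∑ j, v' j * x j = 0 := by
    intro x hx h0
    by_contra h
    exact hsupp x hx h h0
  -- unit vectors have gbar = 0
  have hgsingle : ∀ (i : Fin m) (c : ZMod 3), gbar k (Pi.single i c : Fin m → ZMod 3) = 0 := by
    intro i c
    apply gbar_eq_zero
    calc hammingNorm (Pi.single i c : Fin m → ZMod 3) ≤ ({i} : Finset (Fin m)).card := by
          apply hn_le
          intro t ht
          simp only [Finset.mem_singleton]
          by_contra hti
          apply ht
          simp [Pi.single_apply, hti]
      _ ≤ k := by simpa using (by omega : 1 ≤ k)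
  have hsingle_ne : ∀ i : Fin m, (Pi.single i (1 : ZMod 3) : Fin m → ZMod 3) ≠ 0 := by
    intro i h
    have := congrFun h i
    simp at this
  by_cases hv : v = 0
  · -- Case A : v = 0, so u ≠ 0
    have hu : u ≠ 0 := by
      rcases hnz with ⟨x0, hx0, hf⟩
      intro hu0
      apply hf
      simp [hu0, hv]
    have hv' : ∀ i, v' i = 0 := by
      intro i
      have h0 := hzero (Pi.single i 1) (hsingle_ne i) (by simp [hv, hgsingle])
      rw [hgsingle, sum_single_mul] at h0
      simpa using h0
    refine ⟨u' * u, ?_⟩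
    intro x hx
    have h1 : ∀ j, v j * x j = 0 := by intro j; simp [hv]
    have h2 : ∀ j, v' j * x j = 0 := by intro j; simp [hv']
    rw [Finset.sum_congr rfl (fun j _ => h1 j), Finset.sum_congr rfl (fun j _ => h2 j)]
    simp only [Finset.sum_const_zero, add_zero]
    linear_combination (-(u' * gbar k x)) * zmod3_sq hu
  · -- Case B : v ≠ 0
    obtain ⟨i, hvi⟩ : ∃ i, v i ≠ 0 := by
      by_contra h
      push_neg at h
      exact hv (funext h)
    set β := v' i * v i with hβ
    -- Step 1: v' = β • v
    have hstep1 : ∀ j, v' j = β * v j := by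
      intro j
      by_cases hji : j = i
      · subst hji
        rw [hβ, mul_assoc, zmod3_sq hvi, mul_one]
      · by_cases hvj : v j = 0
        · have h0 := hzero (Pi.single j 1) (hsingle_ne j)
            (by rw [hgsingle, sum_single_mul]; simp [hvj])
          rw [hgsingle, sum_single_mul] at h0
          simp only [mul_zero, zero_add, mul_one] at h0
          rw [h0, hvj, mul_zero]
        · -- weight-2 vector
          set x : Fin m → ZMod 3 := (Pi.single i (v j) : Fin m → ZMod 3) + (Pi.single j (-(v i)) : Fin m → ZMod 3) with hxdef
          have hxi : x i = v j := by
            simp [hxdef, Pi.single_eq_of_ne (Ne.symm hji)]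
          have hxne : x ≠ 0 := by
            intro h
            have := congrFun h i
            rw [hxi] at this
            exact hvj this
          have hsum : ∀ w : Fin m → ZMod 3,
              ∑ t, w t * x t = w i * v j + w j * (-(v i)) := by
            intro w
            simp only [hxdef, Pi.add_apply, mul_add, Finset.sum_add_distrib,
              sum_single_mul]
          have hg : gbar k x = 0 := by
            apply gbar_eq_zero
            calc hammingNorm x ≤ ({i, j} : Finset (Fin m)).card := by
                  apply hn_le
                  intro t ht
                  simp only [Finset.mem_insert, Finset.mem_singleton]
                  by_contra hc
                  push_neg at hc
                  apply ht
                  show (Pi.single i (v j) : Fin m → ZMod 3) t + (Pi.single j (-(v i)) : Fin m → ZMod 3) t = 0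
                  rw [Pi.single_eq_of_ne hc.1, Pi.single_eq_of_ne hc.2, add_zero]
              _ ≤ 2 := Finset.card_insert_le _ _ |>.trans (by simp)
              _ ≤ k := hk2
          have h0 := hzero x hxne (by
            rw [hg, hsum]
            ring)
          rw [hg, hsum] at h0
          simp only [mul_zero, zero_add] at h0
          -- h0 : v' i * v j + v' j * (-(v i)) = 0
          have : v' j * v i = v' i * v j := by linear_combination -h0
          calc v' j = v' j * (v i * v i) := by rw [zmod3_sq hvi, mul_one]
            _ = (v' j * v i) * v i := by ring
            _ = (v' i * v j) * v i := by rw [this]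
            _ = β * v j := by rw [hβ]; ring
    -- Step 2: find z of weight > k with v·z = -u
    obtain ⟨S, hSsub, hScard⟩ : ∃ S : Finset (Fin m), S ⊆ Finset.univ.erase i ∧
        S.card = k + 1 := by
      have hcard : k + 1 ≤ (Finset.univ.erase i).card := by
        rw [Finset.card_erase_of_mem (Finset.mem_univ i), Finset.card_univ, Fintype.card_fin]
        omega
      obtain ⟨S, hS1, hS2⟩ := Finset.exists_subset_card_eq hcard
      exact ⟨S, hS1, hS2⟩
    have hiS : i ∉ S := fun h => (Finset.mem_erase.mp (hSsub h)).1 rfl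
    set s : ZMod 3 := ∑ t ∈ S, v t with hs
    set c : ZMod 3 := v i * (-u - s) with hc
    set z : Fin m → ZMod 3 := (fun t => if t ∈ S then 1 else 0) + Pi.single i c with hzdef
    have hzS : ∀ t ∈ S, z t = 1 := by
      intro t ht
      have hti : t ≠ i := (Finset.mem_erase.mp (hSsub ht)).1
      simp [hzdef, ht, Pi.single_eq_of_ne hti]
    have hzne : z ≠ 0 := by
      obtain ⟨t, ht⟩ := Finset.card_pos.mp (by omega : 0 < S.card)
      intro h
      have := congrFun h t
      rw [hzS t ht] at this
      exact one_ne_zero this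
    have hgz : gbar k z = 1 := by
      apply gbar_eq_one
      have := le_hn z S (fun t ht => by rw [hzS t ht]; exact one_ne_zero)
      omega
    have hsumz : ∀ w : Fin m → ZMod 3,
        ∑ t, w t * z t = (∑ t ∈ S, w t) + w i * c := by
      intro w
      simp only [hzdef, Pi.add_apply, mul_add, Finset.sum_add_distrib, sum_single_mul]
      congr 1
      simp [mul_ite, Finset.sum_ite_mem]
    have hvz : ∑ t, v t * z t = -u := by
      rw [hsumz, ← hs, hc, ← mul_assoc, zmod3_sq hvi, one_mul]
      ring
    have h0 := hzero z hzne (by rw [hgz, hvz]; ring)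
    rw [hgz] at h0
    have hsumz' : ∑ t, v' t * z t = β * (-u) := by
      rw [Finset.sum_congr rfl (fun t _ => by rw [hstep1 t]), ← hvz]
      rw [Finset.mul_sum]
      exact Finset.sum_congr rfl (fun t _ => by ring)
    rw [hsumz'] at h0
    have hu' : u' = β * u := by linear_combination h0
    -- Conclusion
    refine ⟨β, ?_⟩
    intro x hx
    have hsx : ∑ t, v' t * x t = β * ∑ t, v t * x t := by
      rw [Finset.mul_sum]
      exact Finset.sum_congr rfl fun t _ => by rw [hstep1 t]; ring
    rw [hu', hsx]
    ring
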